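/- For all real numbers -1 < b < c, it holds that 1 < f(b,c) < ((c+1)/(b+1))². -/

import Mathlib

/-!
Write `q n = (n + b) / (n + c)` and `a n = log (q n) = logRatio b c n`, which is increasing and
negative on `n ≥ 1`, and let `S N = ∑_{n ≤ N} u n`. Since Thue–Morse is a sequence of pairs `±(1, -1)`,
`-2 ≤ S N ≤ 0`. Summation by parts, `∑_{n ≤ N} u n a n = S N a N - ∑_{n < N} S n (a (n+1) - a n)`,
then traps `log ∏_{n ≤ N} q n ^ u n` between a nondecreasing and a nonincreasing sequence, and
evaluating both at `N = 2` gives `a 2 - a 1 ≤ log f(b,c) ≤ -a 1 - a 2`; conclude with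
`a 1 < a 2`.
-/

open Filter Finset Topology

/-- The Thue–Morse sequence with values `±1`: `u n = (-1)^(s₂ n)` where `s₂ n`
is the sum of the binary digits of `n`. -/
def u (n : ℕ) : ℤ := (-1) ^ (Nat.digits 2 n).sum

section SummationByParts

variable (e a : ℕ → ℝ)

def abelRemainder (N : ℕ) : ℝ :=
  ∑ n ∈ Icc 1 N, e n * a n - (∑ n ∈ Icc 1 N, e n) * a N

lemma abelRemainder_succ (N : ℕ) :
    abelRemainder e a (N + 1)
      = abelRemainder e a N - (∑ n ∈ Icc 1 N, e n) * (a (N + 1) - a N) := by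
  simp only [abelRemainder, sum_Icc_succ_top (Nat.le_add_left 1 N)]
  ring

variable {e a} {K N : ℕ}

lemma abelRemainder_add_mul_le_of_sum_le {M : ℝ} (hS : ∀ N, ∑ n ∈ Icc 1 N, e n ≤ M)
    (ha : ∀ n, 1 ≤ n → a n ≤ a (n + 1)) (hK : 1 ≤ K) (hKN : K ≤ N) :
    abelRemainder e a K + M * a K ≤ abelRemainder e a N + M * a N := by
  induction N, hKN using Nat.le_induction with
  | base => rfl
  | succ N hKN ih =>
    have := mul_nonneg (sub_nonneg.2 (hS N)) (sub_nonneg.2 (ha N (hK.trans hKN)))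
    rw [abelRemainder_succ]
    linarith

lemma abelRemainder_add_mul_le_of_le_sum {m : ℝ} (hS : ∀ N, m ≤ ∑ n ∈ Icc 1 N, e n)
    (ha : ∀ n, 1 ≤ n → a n ≤ a (n + 1)) (hK : 1 ≤ K) (hKN : K ≤ N) :
    abelRemainder e a N + m * a N ≤ abelRemainder e a K + m * a K := by
  induction N, hKN using Nat.le_induction with
  | base => rfl
  | succ N hKN ih =>
    have := mul_nonneg (sub_nonneg.2 (hS N)) (sub_nonneg.2 (ha N (hK.trans hKN)))
    rw [abelRemainder_succ]
    linarith

lemma abelRemainder_add_mul_le_sum_mul {M : ℝ} (hS : ∀ N, ∑ n ∈ Icc 1 N, e n ≤ M)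
    (ha : ∀ n, 1 ≤ n → a n ≤ a (n + 1)) (ha₀ : ∀ n, 1 ≤ n → a n ≤ 0)
    (hK : 1 ≤ K) (hKN : K ≤ N) :
    abelRemainder e a K + M * a K ≤ ∑ n ∈ Icc 1 N, e n * a n := by
  have := mul_le_mul_of_nonpos_right (hS N) (ha₀ N (hK.trans hKN))
  have := abelRemainder_add_mul_le_of_sum_le hS ha hK hKN
  simp only [abelRemainder] at *
  linarith

lemma sum_mul_le_abelRemainder_add_mul {m : ℝ} (hS : ∀ N, m ≤ ∑ n ∈ Icc 1 N, e n)
    (ha : ∀ n, 1 ≤ n → a n ≤ a (n + 1)) (ha₀ : ∀ n, 1 ≤ n → a n ≤ 0)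
    (hK : 1 ≤ K) (hKN : K ≤ N) :
    ∑ n ∈ Icc 1 N, e n * a n ≤ abelRemainder e a K + m * a K := by
  have := mul_le_mul_of_nonpos_right (hS N) (ha₀ N (hK.trans hKN))
  have := abelRemainder_add_mul_le_of_le_sum hS ha hK hKN
  simp only [abelRemainder] at *
  linarith

end SummationByParts

section ThueMorse

lemma u_one : u 1 = -1 := by simp [u]

lemma u_two : u 2 = -1 := by simp [u]

lemma abs_u (n : ℕ) : |u n| = 1 := by simp [u]

lemma u_two_mul (k : ℕ) : u (2 * k) = u k := by
  rcases k.eq_zero_or_pos with rfl | hk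
  · rfl
  rw [u, Nat.digits_def' one_lt_two (by positivity)]
  simp [u]

lemma u_two_mul_add_one (k : ℕ) : u (2 * k + 1) = -u k := by
  rw [u, Nat.digits_def' one_lt_two (by positivity)]
  simp [u, Nat.mul_add_div, pow_add]

lemma sum_range_two_mul_u (M : ℕ) : ∑ k ∈ range (2 * M), u k = 0 := by
  induction M with
  | zero => rfl
  | succ M ih =>
    rw [Nat.mul_succ, sum_range_succ, sum_range_succ, ih, u_two_mul, u_two_mul_add_one]
    ring

lemma abs_sum_range_u_le_one (N : ℕ) : |∑ k ∈ range N, u k| ≤ 1 := by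
  obtain ⟨M, rfl | rfl⟩ := N.even_or_odd'
  · simp [sum_range_two_mul_u]
  · rw [sum_range_succ, sum_range_two_mul_u, zero_add, abs_u]

lemma sum_Icc_one_u_mem (N : ℕ) : -2 ≤ ∑ n ∈ Icc 1 N, u n ∧ ∑ n ∈ Icc 1 N, u n ≤ 0 := by
  have hsplit : ∑ k ∈ range (N + 1), u k = 1 + ∑ n ∈ Icc 1 N, u n := by
    rw [sum_range_eq_add_Ico _ (Nat.add_one_pos N), Ico_add_one_right_eq_Icc]
    simp [u]
  have := abs_le.1 (abs_sum_range_u_le_one (N + 1))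
  constructor <;> linarith

end ThueMorse

section LogRatio

variable {b c x y : ℝ}

lemma add_div_add_lt_one (hxb : 0 < x + b) (hbc : b < c) : (x + b) / (x + c) < 1 :=
  (div_lt_one (by linarith)).2 (by linarith)

lemma add_div_add_lt_add_div_add (hxb : 0 < x + b) (hbc : b < c) (hxy : x < y) :
    (x + b) / (x + c) < (y + b) / (y + c) := by
  rw [div_lt_div_iff₀ (by linarith) (by linarith)]
  nlinarith

noncomputable def logRatio (b c x : ℝ) : ℝ := Real.log ((x + b) / (x + c))

lemma logRatio_lt_logRatio (hxb : 0 < x + b) (hbc : b < c) (hxy : x < y) :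
    logRatio b c x < logRatio b c y :=
  Real.log_lt_log (div_pos hxb (by linarith)) (add_div_add_lt_add_div_add hxb hbc hxy)

lemma logRatio_nonpos (hxb : 0 < x + b) (hbc : b < c) : logRatio b c x ≤ 0 :=
  Real.log_nonpos (div_pos hxb (by linarith)).le (add_div_add_lt_one hxb hbc).le

lemma exp_neg_two_mul_logRatio_one (hb : -1 < b) (hbc : b < c) :
    Real.exp (-2 * logRatio b c 1) = ((c + 1) / (b + 1)) ^ 2 := by
  have hpos : 0 < ((c + 1) / (b + 1)) ^ 2 := pow_pos (div_pos (by linarith) (by linarith)) 2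
  rw [← Real.exp_log hpos, Real.log_pow, ← inv_div, Real.log_inv, logRatio]
  push_cast
  ring_nf

lemma prod_zpow_u_eq_exp_sum (hb : -1 < b) (hbc : b < c) (N : ℕ) :
    ∏ n ∈ Icc 1 N, (((n : ℝ) + b) / (n + c)) ^ u n
      = Real.exp (∑ n ∈ Icc 1 N, (u n : ℝ) * logRatio b c n) := by
  rw [Real.exp_sum]
  refine prod_congr rfl fun n hn => ?_
  have : (1 : ℝ) ≤ n := by exact_mod_cast (mem_Icc.1 hn).1
  rw [logRatio, ← Real.log_zpow, Real.exp_log (zpow_pos (div_pos (by linarith) (by linarith)) _)]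

lemma exp_logRatio_le_prod_zpow_u_le (hb : -1 < b) (hbc : b < c) {N : ℕ} (hN : 2 ≤ N) :
    Real.exp (logRatio b c 2 - logRatio b c 1) ≤ ∏ n ∈ Icc 1 N, (((n : ℝ) + b) / (n + c)) ^ u n ∧
      ∏ n ∈ Icc 1 N, (((n : ℝ) + b) / (n + c)) ^ u n
        ≤ Real.exp (-logRatio b c 1 - logRatio b c 2) := by
  set a : ℕ → ℝ := fun n => logRatio b c n
  have hpos : ∀ n : ℕ, 1 ≤ n → 0 < (n : ℝ) + b := fun n hn => by
    have : (1 : ℝ) ≤ n := by exact_mod_cast hn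
    linarith
  have ha : ∀ n, 1 ≤ n → a n ≤ a (n + 1) := fun n hn => by
    simpa [a] using (logRatio_lt_logRatio (hpos n hn) hbc (lt_add_one (n : ℝ))).le
  have ha₀ : ∀ n, 1 ≤ n → a n ≤ 0 := fun n hn => logRatio_nonpos (hpos n hn) hbc
  have hS : ∀ N, -2 ≤ ∑ n ∈ Icc 1 N, (u n : ℝ) ∧ ∑ n ∈ Icc 1 N, (u n : ℝ) ≤ 0 := fun N => by
    exact_mod_cast sum_Icc_one_u_mem N
  have hR₂ : abelRemainder (fun n => (u n : ℝ)) a 2 = a 2 - a 1 := by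
    norm_num [abelRemainder, sum_Icc_succ_top, u_one, u_two]
    ring
  have hlow := abelRemainder_add_mul_le_sum_mul (fun N => (hS N).2) ha ha₀ one_le_two hN
  have hup := sum_mul_le_abelRemainder_add_mul (fun N => (hS N).1) ha ha₀ one_le_two hN
  rw [hR₂] at hlow hup
  simp only [a, Nat.cast_one, Nat.cast_ofNat] at hlow hup
  rw [prod_zpow_u_eq_exp_sum hb hbc, Real.exp_le_exp, Real.exp_le_exp]
  constructor <;> linarith

end LogRatio

theorem stmt_8_general (f : ℝ → ℝ → ℝ)
    (hf : ∀ b c : ℝ, -1 < b → -1 < c →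
      Tendsto (fun N : ℕ => ∏ n ∈ Finset.Icc 1 N,
        (((n : ℝ) + b) / ((n : ℝ) + c)) ^ (u n)) atTop (𝓝 (f b c))) :
    ∀ b c : ℝ, -1 < b → b < c →
      1 < f b c ∧ f b c < ((c + 1) / (b + 1)) ^ 2 := by
  intro b c hb hbc
  have hlim := hf b c hb (hb.trans hbc)
  have hbounds : ∀ᶠ N in atTop, _ := eventually_atTop.2
    ⟨2, fun N hN => exp_logRatio_le_prod_zpow_u_le hb hbc hN⟩
  have hlow := ge_of_tendsto hlim (hbounds.mono fun _ h => h.1)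
  have hup := le_of_tendsto hlim (hbounds.mono fun _ h => h.2)
  have h12 : logRatio b c 1 < logRatio b c 2 :=
    logRatio_lt_logRatio (by linarith) hbc one_lt_two
  refine ⟨(Real.one_lt_exp_iff.2 (sub_pos.2 h12)).trans_le hlow, ?_⟩
  calc f b c ≤ Real.exp (-logRatio b c 1 - logRatio b c 2) := hup
    _ < Real.exp (-2 * logRatio b c 1) := Real.exp_lt_exp.2 (by linarith)
    _ = ((c + 1) / (b + 1)) ^ 2 := exp_neg_two_mul_logRatio_one hb hbc

/-- If `f b c` is, for `b, c > -1`, the (positive) limit of the partial products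
`∏_{n=1}^{N} ((n+b)/(n+c))^{u_n}`, then for `-1 < b < c` one has
`1 < f(b,c) < ((c+1)/(b+1))²`. -/
theorem stmt_8 (f : ℝ → ℝ → ℝ)
    (hf : ∀ b c : ℝ, -1 < b → -1 < c →
      Tendsto (fun N : ℕ => ∏ n ∈ Finset.Icc 1 N,
        (((n : ℝ) + b) / ((n : ℝ) + c)) ^ (u n)) atTop (𝓝 (f b c)))
    (hfpos : ∀ b c : ℝ, -1 < b → -1 < c → 0 < f b c) :
    ∀ b c : ℝ, -1 < b → b < c →
      1 < f b c ∧ f b c < ((c + 1) / (b + 1)) ^ 2 :=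
  stmt_8_general f hf
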